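/- arXiv:math/0210190 — 3 statements merged into one kernel-verified Lean document; each statement's English description precedes it below -/
import Mathlib

section
/- Let n be a prime, let Q be a group of exponent n, let P be a subgroup of Q of order n, and let φ : P ≃ P be an automorphism of P with φ ≠ id. Let G = HNN(Q, P, P, φ) with canonical embedding of : Q → G. Then of(p) ∈ Gⁿ for every p ∈ P; in particular, the composite homomorphism Q → G → G/Gⁿ is not injective. -/
/-- The subgroup of `G` generated by all `n`-th powers. -/
def powSubgroup (G : Type*) [Group G] (n : ℕ) : Subgroup G :=
  Subgroup.closure {x : G | ∃ g : G, g ^ n = x}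

instance powSubgroup_normal (G : Type*) [Group G] (n : ℕ) : (powSubgroup G n).Normal := by
  constructor
  intro x hx g
  induction hx using Subgroup.closure_induction with
  | mem y hy =>
    obtain ⟨a, rfl⟩ := hy
    exact Subgroup.subset_closure ⟨g * a * g⁻¹, by rw [conj_pow]⟩
  | one => simpa using (powSubgroup G n).one_mem
  | mul a b _ _ ha hb =>
    have : g * (a * b) * g⁻¹ = (g * a * g⁻¹) * (g * b * g⁻¹) := by group
    rw [this]; exact (powSubgroup G n).mul_mem ha hb
  | inv a _ ha =>
    have : g * a⁻¹ * g⁻¹ = (g * a * g⁻¹)⁻¹ := by group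
    rw [this]; exact (powSubgroup G n).inv_mem ha

/-- the first example of the introduction. -/
theorem subgroup_of_prime_order_dies_in_burnside_quotient
    (n : ℕ) (hp : n.Prime)
    {Q : Type*} [Group Q] (hQexp : ∀ q : Q, q ^ n = 1)
    (P : Subgroup Q) (hP : Nat.card P = n)
    (φ : P ≃* P) (hφ : φ ≠ MulEquiv.refl P) :
    (∀ p ∈ P, (HNNExtension.of : Q →* HNNExtension Q P P φ) p ∈
        powSubgroup (HNNExtension Q P P φ) n) ∧
    ¬ Function.Injective
        ((QuotientGroup.mk' (powSubgroup (HNNExtension Q P P φ) n)).comp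
          (HNNExtension.of : Q →* HNNExtension Q P P φ)) := by
  haveI : Fact n.Prime := ⟨hp⟩
  haveI : IsCyclic P := isCyclic_of_prime_card hP
  have hPexp : ∀ y : P, y ^ n = 1 := by
    intro y
    ext
    push_cast
    exact hQexp _
  obtain ⟨k, hk⟩ := MonoidHom.map_cyclic (φ : P →* P)
  have hk' : ∀ g : P, φ g = g ^ k := hk
  have hPexpz : ∀ (y : P) (m : ℤ), ((n : ℤ) ∣ m) → y ^ m = 1 := by
    intro y m hd
    obtain ⟨c, rfl⟩ := hd
    rw [zpow_mul, zpow_natCast, hPexp, one_zpow]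
  -- k is not 1 mod n
  have hK1 : ((k : ZMod n) : ZMod n) ≠ 1 := by
    intro h
    apply hφ
    apply MulEquiv.ext
    intro y
    have hd : (n : ℤ) ∣ k - 1 :=
      (ZMod.intCast_zmod_eq_zero_iff_dvd (k - 1) n).mp (by push_cast [h]; ring)
    have h1 : y ^ (k - 1) = 1 := hPexpz y _ hd
    calc φ y = y ^ (k - 1) * y := by rw [hk' y, ← zpow_add_one]; ring_nf
    _ = y := by rw [h1, one_mul]
  -- the geometric sum is 1 mod n
  have hgeom : (n : ℤ) ∣ k * ((∑ j ∈ Finset.range n, k ^ j) - 1) := by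
    rw [← ZMod.intCast_zmod_eq_zero_iff_dvd]
    push_cast
    set K : ZMod n := (k : ZMod n) with hKdef
    have h1 : (∑ j ∈ Finset.range n, K ^ j) * (K - 1) = K ^ n - 1 := geom_sum_mul K n
    have h2 : K ^ n = K := ZMod.pow_card K
    have h3 : ((∑ j ∈ Finset.range n, K ^ j) - 1) * (K - 1) = 0 := by
      rw [sub_mul, h1, h2, one_mul]; ring
    have h4 : (∑ j ∈ Finset.range n, K ^ j) - 1 = 0 := by
      rcases mul_eq_zero.mp h3 with h | h
      · exact h
      · exact absurd (by linear_combination h) hK1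
    rw [h4, mul_zero]
  -- key power computation in the HNN extension
  have key : ∀ (y : P) (m : ℕ),
      (HNNExtension.t * HNNExtension.of (y : Q)) ^ m
        = (HNNExtension.of : Q →* HNNExtension Q P P φ)
            ((y ^ (k * ∑ j ∈ Finset.range m, k ^ j) : P) : Q) * HNNExtension.t ^ m := by
    intro y m
    induction m with
    | zero => simp
    | succ m ih =>
      have h5 : (HNNExtension.of (y : Q) : HNNExtension Q P P φ)
            * HNNExtension.of ((y ^ (k * ∑ j ∈ Finset.range m, k ^ j) : P) : Q)
          = HNNExtension.of (((y ^ (1 + k * ∑ j ∈ Finset.range m, k ^ j) : P) : Q)) := by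
        rw [← map_mul]
        congr 1
        push_cast
        rw [zpow_add, zpow_one]
      have hφpow : φ (y ^ (1 + k * ∑ j ∈ Finset.range m, k ^ j))
          = y ^ (k * ∑ j ∈ Finset.range (m + 1), k ^ j) := by
        rw [hk', ← zpow_mul]
        congr 1
        rw [geom_sum_succ]
        ring
      rw [pow_succ', ih, ← mul_assoc,
        mul_assoc HNNExtension.t, h5,
        HNNExtension.t_mul_of (φ := φ) (y ^ (1 + k * ∑ j ∈ Finset.range m, k ^ j)),
        hφpow, mul_assoc, ← pow_succ']
  have main : ∀ p ∈ P, (HNNExtension.of : Q →* HNNExtension Q P P φ) p ∈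
      powSubgroup (HNNExtension Q P P φ) n := by
    intro p hpP
    set y : P := φ.symm ⟨p, hpP⟩ with hy
    have hφy : φ y = ⟨p, hpP⟩ := φ.apply_symm_apply _
    have hyk : (y ^ (k * ∑ j ∈ Finset.range n, k ^ j) : P) = φ y := by
      rw [hk' y]
      have h6 : y ^ (k * ∑ j ∈ Finset.range n, k ^ j)
          = y ^ (k * ((∑ j ∈ Finset.range n, k ^ j) - 1)) * y ^ k := by
        rw [← zpow_add]
        congr 1
        ring
      rw [h6, hPexpz y _ hgeom, one_mul]
    have hkey := key y n
    rw [hyk, hφy] at hkey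
    have h7 : (HNNExtension.of : Q →* HNNExtension Q P P φ) p
        = (HNNExtension.t * HNNExtension.of (y : Q)) ^ n * (HNNExtension.t⁻¹) ^ n := by
      rw [hkey, inv_pow, mul_assoc, mul_inv_cancel, mul_one]
    rw [h7]
    exact Subgroup.mul_mem _ (Subgroup.subset_closure ⟨_, rfl⟩)
      (Subgroup.subset_closure ⟨_, rfl⟩)
  refine ⟨main, ?_⟩
  intro hinj
  haveI : Finite P := Nat.finite_of_card_ne_zero (by rw [hP]; exact hp.pos.ne')
  haveI : Nontrivial P := by
    rw [← Finite.one_lt_card_iff_nontrivial, hP]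
    exact hp.one_lt
  obtain ⟨x, hx⟩ := exists_ne (1 : P)
  have h1 : ((QuotientGroup.mk' (powSubgroup (HNNExtension Q P P φ) n)).comp
      (HNNExtension.of : Q →* HNNExtension Q P P φ)) (x : Q) = 1 := by
    simp only [MonoidHom.comp_apply, QuotientGroup.mk'_apply]
    rw [QuotientGroup.eq_one_iff]
    exact main x x.2
  have h2 := hinj (a₁ := (x : Q)) (a₂ := 1) (by rw [h1, map_one])
  exact hx (Subtype.ext (by simpa using h2))
end

section
/- Let n ≥ 1, let Q be a group of exponent n, and let φ be an automorphism of Q with φⁿ ≠ id. Let G = HNN(Q, Q, Q, φ) be the HNN extension of Q with both associated subgroups equal to Q (the ascending/automorphism HNN extension), with canonical embedding of : Q → G. Then of(Q) ∩ Gⁿ ≠ {1}; in particular, the composite homomorphism Q → G → G/Gⁿ is not injective. -/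
/-- the second example of the introduction, on the automorphism (ascending)
HNN extension `HNN(Q, Q, Q, φ)` with `φⁿ ≠ 1` in `Aut Q`. -/
theorem automorphism_hnn_extension_not_embeds
    (n : ℕ) (hn : 1 ≤ n)
    {Q : Type*} [Group Q] (hQexp : ∀ q : Q, q ^ n = 1)
    (φ : MulAut Q) (hφ : φ ^ n ≠ 1) :
    ((HNNExtension.of : Q →* HNNExtension Q ⊤ ⊤
          (Subgroup.topEquiv.trans (φ.trans Subgroup.topEquiv.symm))).range ⊓
        powSubgroup (HNNExtension Q ⊤ ⊤
          (Subgroup.topEquiv.trans (φ.trans Subgroup.topEquiv.symm))) n ≠ ⊥) ∧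
    ¬ Function.Injective
        ((QuotientGroup.mk' (powSubgroup (HNNExtension Q ⊤ ⊤
            (Subgroup.topEquiv.trans (φ.trans Subgroup.topEquiv.symm))) n)).comp
          (HNNExtension.of : Q →* HNNExtension Q ⊤ ⊤
            (Subgroup.topEquiv.trans (φ.trans Subgroup.topEquiv.symm)))) := by

  classical
  set ψ := Subgroup.topEquiv.trans (φ.trans Subgroup.topEquiv.symm) with hψ
  set G := HNNExtension Q ⊤ ⊤ ψ with hG
  have conj1 : ∀ q : Q, (HNNExtension.of (φ q) : G) =
      HNNExtension.t * HNNExtension.of q * HNNExtension.t⁻¹ := by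
    intro q
    have := HNNExtension.equiv_eq_conj (φ := ψ) (⟨q, trivial⟩ : (⊤ : Subgroup Q))
    simpa [hψ] using this
  have conjk : ∀ k : ℕ, ∀ q : Q, (HNNExtension.of ((φ ^ k) q) : G) =
      HNNExtension.t ^ k * HNNExtension.of q * (HNNExtension.t ^ k)⁻¹ := by
    intro k
    induction k with
    | zero => intro q; simp
    | succ k ih =>
      intro q
      have h1 : (φ ^ (k + 1)) q = φ ((φ ^ k) q) := by
        rw [pow_succ']; rfl
      rw [h1, conj1, ih, pow_succ']
      group
  obtain ⟨q, hq⟩ : ∃ q : Q, (φ ^ n) q ≠ q := by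
    by_contra h
    push_neg at h
    exact hφ (MulEquiv.ext h)
  -- the key element
  set a : G := HNNExtension.of ((φ ^ n) q) with ha
  set b : G := HNNExtension.of q with hb
  have hxmem : b * a⁻¹ ∈ powSubgroup G n := by
    have htn : (HNNExtension.t ^ n : G) ∈ powSubgroup G n :=
      Subgroup.subset_closure ⟨HNNExtension.t, rfl⟩
    have h1 : b * HNNExtension.t ^ n * b⁻¹ ∈ powSubgroup G n :=
      (powSubgroup_normal G n).conj_mem _ htn b
    have h2 : b * a⁻¹ = (b * HNNExtension.t ^ n * b⁻¹) * (HNNExtension.t ^ n)⁻¹ := by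
      rw [ha, conjk n q, ← hb]
      group
    rw [h2]
    exact (powSubgroup G n).mul_mem h1 ((powSubgroup G n).inv_mem htn)
  have hne : b * a⁻¹ ≠ 1 := by
    intro h
    apply hq
    have : a = b := by
      have := mul_eq_one_iff_eq_inv.mp h
      rw [this]; group
    rw [ha, hb] at this
    exact HNNExtension.of_injective (G := Q) (A := ⊤) (B := ⊤) (φ := ψ) this
  constructor
  · intro hbot
    apply hne
    have : b * a⁻¹ ∈ (HNNExtension.of : Q →* G).range ⊓ powSubgroup G n := by
      refine ⟨⟨q * ((φ ^ n) q)⁻¹, ?_⟩, hxmem⟩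
      simp [ha, hb]
    rw [hbot] at this
    simpa using this
  · intro hinj
    apply hq
    have hmem : a⁻¹ * b ∈ powSubgroup G n := (powSubgroup_normal G n).mem_comm hxmem
    have : ((QuotientGroup.mk' (powSubgroup G n)).comp (HNNExtension.of : Q →* G))
        ((φ ^ n) q) = ((QuotientGroup.mk' (powSubgroup G n)).comp
          (HNNExtension.of : Q →* G)) q := by
      simp only [MonoidHom.comp_apply, QuotientGroup.mk'_apply]
      exact (QuotientGroup.eq (s := powSubgroup G n)).mpr hmem
    exact hinj this
end

section
/- Let Q be a group, let P₁, P₂ be subgroups of Q which are both antinormal in Q and satisfy q P₁ q⁻¹ ∩ P₂ = {1} for every q ∈ Q, let φ : P₁ ≃ P₂ be an isomorphism, and let G = HNN(Q, P₁, P₂, φ) with canonical embedding of : Q → G. Then for every A ∈ G which is not conjugate in G to an element of of(Q), the maximal subgroup F(A) of of(Q) normalized by A is trivial. -/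
/-!
Write `A` as a reduced word `h t^u₁ g₁ ⋯ t^uₙ gₙ` and let `P_u` be `P₁` for `u = 1` and `P₂`
for `u = -1`. If `A` conjugates a nontrivial `of q'` to `of q`, Britton's lemma forces a pinch
in the middle of `A⁻¹ (of q') A`: `h⁻¹ q' h ∈ P_{-u₁}`, and pushing it through `t^u₁` gives a
nontrivial `p ∈ P_{u₁}` conjugated into `of(Q)` by the shorter word `g₁ t^u₂ ⋯`. For `n ≥ 2`
the next pinch gives `g₁⁻¹ p g₁ ∈ P_{-u₂}`: if `u₂ = u₁` this contradicts
`q P₁ q⁻¹ ∩ P₂ = 1`, and if `u₂ = -u₁` antinormality gives `g₁ ∈ P_{u₁}`, contradicting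
reducedness. So `n ≤ 1`, and for `n = 1` conjugating by both `A` and `A⁻¹` into `of(Q)` puts
`g₁ q g₁⁻¹` in `P_{u₁}` and its conjugate `h⁻¹ q h` in `P_{-u₁}`, again impossible. Hence
`A ∈ of(Q)` as soon as `A` normalizes a nontrivial subgroup of `of(Q)`.
-/

/-- `A` normalizes the subgroup `H`, i.e. `A H A⁻¹ = H`. -/
def Normalizes {G : Type*} [Group G] (A : G) (H : Subgroup G) : Prop :=
  ∀ x : G, x ∈ H ↔ A * x * A⁻¹ ∈ H

/-- The maximal subgroup of `Q` normalized by `A`: the join of all subgroups of `Q`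
normalized by `A`. -/
def maxNormalized {G : Type*} [Group G] (Q : Subgroup G) (A : G) : Subgroup G :=
  sSup {H : Subgroup G | H ≤ Q ∧ Normalizes A H}

/-- A subgroup `H` of `K` is antinormal if `gHg⁻¹ ∩ H ≠ {1}` implies `g ∈ H`. -/
def Antinormal {K : Type*} [Group K] (H : Subgroup K) : Prop :=
  ∀ g : K, H.map (MulAut.conj g).toMonoidHom ⊓ H ≠ ⊥ → g ∈ H

theorem Antinormal.mem_of_conj_mem {K : Type*} [Group K] {H : Subgroup K} (hH : Antinormal H)
    {x g : K} (hx : x ≠ 1) (hxH : x ∈ H) (hgx : g⁻¹ * x * g ∈ H) : g ∈ H := by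
  refine hH g fun hbot => hx ?_
  rw [← Subgroup.mem_bot, ← hbot]
  exact ⟨Subgroup.mem_map_equiv.2 (by simpa using hgx), hxH⟩

namespace HNNExtension

open NormalWord

variable {Q : Type*} [Group Q] {P₁ P₂ : Subgroup Q}

theorem antinormal_toSubgroup (hanti₁ : Antinormal P₁) (hanti₂ : Antinormal P₂) (u : ℤˣ) :
    Antinormal (toSubgroup P₁ P₂ u) := by
  unfold toSubgroup
  split_ifs <;> assumption

theorem eq_one_of_mem_toSubgroup_of_conj_mem_toSubgroup_neg
    (hint : ∀ q : Q, P₁.map (MulAut.conj q).toMonoidHom ⊓ P₂ = ⊥) {u : ℤˣ} {x g : Q}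
    (hxu : x ∈ toSubgroup P₁ P₂ u) (hgx : g⁻¹ * x * g ∈ toSubgroup P₁ P₂ (-u)) : x = 1 := by
  have conj_trivial : ∀ y c : Q, y ∈ P₂ → c⁻¹ * y * c ∈ P₁ → y = 1 := fun y c hy hcy => by
    have hmem : y ∈ P₁.map (MulAut.conj c).toMonoidHom ⊓ P₂ :=
      ⟨Subgroup.mem_map_equiv.2 (by simpa using hcy), hy⟩
    rwa [hint c, Subgroup.mem_bot] at hmem
  rcases Int.units_eq_one_or u with rfl | rfl
  · have h := conj_trivial (g⁻¹ * x * g) g⁻¹ hgx (by simpa [mul_assoc] using hxu)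
    rwa [mul_assoc, inv_mul_eq_one, eq_comm, mul_eq_right] at h
  · exact conj_trivial x g hxu (by simpa using hgx)

theorem eq_and_mem_of_conj_mem_toSubgroup (hanti₁ : Antinormal P₁) (hanti₂ : Antinormal P₂)
    (hint : ∀ q : Q, P₁.map (MulAut.conj q).toMonoidHom ⊓ P₂ = ⊥) {u v : ℤˣ} {x g : Q}
    (hx : x ≠ 1) (hxu : x ∈ toSubgroup P₁ P₂ u) (hgx : g⁻¹ * x * g ∈ toSubgroup P₁ P₂ v) :
    v = u ∧ g ∈ toSubgroup P₁ P₂ u := by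
  by_cases hvu : v = u
  · subst hvu
    exact ⟨rfl, (antinormal_toSubgroup hanti₁ hanti₂ v).mem_of_conj_mem hx hxu hgx⟩
  · obtain rfl := Int.units_ne_iff_eq_neg.1 hvu
    exact absurd (eq_one_of_mem_toSubgroup_of_conj_mem_toSubgroup_neg hint hxu hgx) hx

variable (φ : P₁ ≃* P₂)

theorem exists_of_mul_t_pow_eq_t_pow_mul_of {u : ℤˣ} {x : Q} (hx : x ∈ toSubgroup P₁ P₂ (-u)) :
    ∃ y ∈ toSubgroup P₁ P₂ u,
      (of x : HNNExtension Q P₁ P₂ φ) * t ^ (u : ℤ) = t ^ (u : ℤ) * of y := by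
  rcases Int.units_eq_one_or u with rfl | rfl
  · exact ⟨φ.symm ⟨x, hx⟩, (φ.symm ⟨x, hx⟩).2, by simpa using of_mul_t (φ := φ) ⟨x, hx⟩⟩
  · rw [neg_neg] at hx
    exact ⟨φ ⟨x, hx⟩, (φ ⟨x, hx⟩).2, by simpa using of_mul_inv_t (φ := φ) ⟨x, hx⟩⟩

theorem ReducedWord.conj_head_mem_toSubgroup {w : ReducedWord Q P₁ P₂} {u : ℤˣ}
    (hu : u ∈ w.toList.head?.map Prod.fst) {q q' : Q}
    (h : SemiconjBy (w.prod φ) (of q) (of q')) :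
    w.head⁻¹ * q' * w.head ∈ toSubgroup P₁ P₂ (-u) := by
  -- `q' · w · q⁻¹`, with `q'` absorbed into the head and `q⁻¹` into the last letter, is a second
  -- reduced word for `w`; the heads of two such words agree modulo `P_{-u}`.
  obtain ⟨L, ⟨v, k⟩, hL⟩ : ∃ L x, w.toList = L ++ [x] :=
    (List.eq_nil_or_concat' w.toList).resolve_left (by rintro h; simp [h] at hu)
  have chain : (L ++ [(v, k * q⁻¹)]).IsChain
      fun a b => a.2 ∈ toSubgroup P₁ P₂ a.1 → a.1 = b.1 := by
    have := w.chain
    rw [hL, List.isChain_append] at this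
    exact List.isChain_append.2 ⟨this.1, .singleton _, by simpa using this.2.2⟩
  have hprod : w.prod φ =
      (⟨q' * w.head, L ++ [(v, k * q⁻¹)], chain⟩ : ReducedWord Q P₁ P₂).prod φ := by
    rw [← mul_inv_cancel_right (w.prod φ) (of q), h.eq]
    simp [ReducedWord.prod, hL, mul_assoc]
  simpa [mul_assoc] using (ReducedWord.map_fst_eq_and_of_prod_eq φ hprod).2 u hu

theorem ReducedWord.exists_semiconjBy_tail {h g : Q} {u : ℤˣ} {L : List (ℤˣ × Q)}
    (ch : ((u, g) :: L).IsChain _) {q q' : Q}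
    (hw : SemiconjBy ((⟨h, (u, g) :: L, ch⟩ : ReducedWord Q P₁ P₂).prod φ) (of q) (of q')) :
    ∃ p ∈ toSubgroup P₁ P₂ u,
      SemiconjBy ((⟨g, L, ch.tail⟩ : ReducedWord Q P₁ P₂).prod φ) (of q) (of p) := by
  set T := (⟨g, L, ch.tail⟩ : ReducedWord Q P₁ P₂).prod φ
  set a : HNNExtension Q P₁ P₂ φ := of h * t ^ (u : ℤ)
  have hwT : (⟨h, (u, g) :: L, ch⟩ : ReducedWord Q P₁ P₂).prod φ = a * T := by
    simp [T, a, ReducedWord.prod, mul_assoc]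
  obtain ⟨p, hpu, hp⟩ := exists_of_mul_t_pow_eq_t_pow_mul_of φ
    (ReducedWord.conj_head_mem_toSubgroup φ (w := ⟨h, (u, g) :: L, ch⟩) rfl hw)
  have hpa : of p = a⁻¹ * of q' * a := by
    rw [eq_inv_mul_of_mul_eq hp.symm]
    simp [a, mul_assoc]
  refine ⟨p, hpu, ?_⟩
  rw [hwT] at hw
  rw [SemiconjBy, hpa, show a⁻¹ * of q' * a * T = a⁻¹ * (of q' * (a * T)) by group, ← hw.eq]
  group

theorem ReducedWord.tail_eq_nil_of_semiconjBy (hanti₁ : Antinormal P₁) (hanti₂ : Antinormal P₂)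
    (hint : ∀ q : Q, P₁.map (MulAut.conj q).toMonoidHom ⊓ P₂ = ⊥)
    {h g : Q} {u : ℤˣ} {L : List (ℤˣ × Q)} (ch : ((u, g) :: L).IsChain _) {q q' : Q}
    (hq : q ≠ 1)
    (hw : SemiconjBy ((⟨h, (u, g) :: L, ch⟩ : ReducedWord Q P₁ P₂).prod φ) (of q) (of q')) :
    L = [] ∧ g * q * g⁻¹ ∈ toSubgroup P₁ P₂ u := by
  obtain ⟨p, hpu, hT⟩ := exists_semiconjBy_tail φ ch hw
  have hp : p ≠ 1 := by
    rintro rfl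
    exact hq (of_injective φ (by simpa using hT.eq_one_iff.2 (map_one of)))
  cases L with
  | nil =>
    refine ⟨rfl, ?_⟩
    have hgp : g * q * g⁻¹ = p := of_injective φ (by
      simpa [SemiconjBy, ReducedWord.prod, mul_inv_eq_iff_eq_mul] using hT)
    rwa [hgp]
  | cons x L =>
    have hgp := ReducedWord.conj_head_mem_toSubgroup φ (w := ⟨g, x :: L, ch.tail⟩) rfl hT
    obtain ⟨hx, hg⟩ := eq_and_mem_of_conj_mem_toSubgroup hanti₁ hanti₂ hint hp hpu hgp
    have hux : u = x.1 := (List.isChain_cons_cons.1 ch).1 hg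
    exact absurd (hux.trans (neg_eq_iff_eq_neg.1 hx)) (units_ne_neg_self u)

theorem ReducedWord.exists_prod_eq (A : HNNExtension Q P₁ P₂ φ) :
    ∃ w : ReducedWord Q P₁ P₂, w.prod φ = A := by
  obtain ⟨d⟩ := TransversalPair.nonempty Q P₁ P₂
  exact ⟨(NormalWord.equiv φ d A).toReducedWord, (NormalWord.equiv φ d).symm_apply_apply A⟩

theorem mem_range_of_conj_mem_range (hanti₁ : Antinormal P₁) (hanti₂ : Antinormal P₂)
    (hint : ∀ q : Q, P₁.map (MulAut.conj q).toMonoidHom ⊓ P₂ = ⊥)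
    {A : HNNExtension Q P₁ P₂ φ} {q : Q} (hq : q ≠ 1)
    (hA₁ : A * of q * A⁻¹ ∈ (of : Q →* HNNExtension Q P₁ P₂ φ).range)
    (hA₂ : A⁻¹ * of q * A ∈ (of : Q →* HNNExtension Q P₁ P₂ φ).range) :
    A ∈ (of : Q →* HNNExtension Q P₁ P₂ φ).range := by
  obtain ⟨w, rfl⟩ := ReducedWord.exists_prod_eq φ A
  obtain ⟨q₁, hq₁⟩ := hA₁
  obtain ⟨q₂, hq₂⟩ := hA₂
  have hs₁ : SemiconjBy (w.prod φ) (of q) (of q₁) := by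
    rw [SemiconjBy, hq₁]; group
  have hs₂ : SemiconjBy (w.prod φ) (of q₂) (of q) := by
    rw [SemiconjBy, hq₂]; group
  rcases w with ⟨h, _ | ⟨⟨u, g⟩, L⟩, ch⟩
  · exact ⟨h, by simp [ReducedWord.prod]⟩
  obtain ⟨rfl, hg⟩ := ReducedWord.tail_eq_nil_of_semiconjBy φ hanti₁ hanti₂ hint ch hq hs₁
  have hhead := ReducedWord.conj_head_mem_toSubgroup φ (u := u) rfl hs₂
  have hgq : g * q * g⁻¹ ≠ 1 := by simpa using hq
  obtain ⟨hu, -⟩ := eq_and_mem_of_conj_mem_toSubgroup (g := g * h) hanti₁ hanti₂ hint hgq hg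
    (by simpa [mul_assoc] using hhead)
  exact (neg_units_ne_self u hu).elim

end HNNExtension

/-- under Mikhajlovskii's hypotheses, `F(A)` is trivial for every `A` not
conjugate to an element of the base group. -/
theorem maxNormalized_trivial_of_antinormal
    {Q : Type*} [Group Q] (P₁ P₂ : Subgroup Q)
    (hanti₁ : Antinormal P₁) (hanti₂ : Antinormal P₂)
    (hint : ∀ q : Q, P₁.map (MulAut.conj q).toMonoidHom ⊓ P₂ = ⊥)
    (φ : P₁ ≃* P₂)
    (A : HNNExtension Q P₁ P₂ φ)
    (hA : ¬ ∃ q ∈ (HNNExtension.of : Q →* HNNExtension Q P₁ P₂ φ).range, IsConj A q) :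
    maxNormalized (HNNExtension.of : Q →* HNNExtension Q P₁ P₂ φ).range A = ⊥ := by
  rw [maxNormalized, sSup_eq_bot]
  rintro H ⟨hHQ, hAH⟩
  refine (Subgroup.eq_bot_iff_forall H).2 fun x hx => ?_
  obtain ⟨q, rfl⟩ := hHQ hx
  by_contra hq
  have hA₂ : A⁻¹ * HNNExtension.of q * A ∈ H := (hAH _).2 (by simpa [mul_assoc] using hx)
  exact hA ⟨A, HNNExtension.mem_range_of_conj_mem_range φ hanti₁ hanti₂ hint
    (by rintro rfl; exact hq (map_one _)) (hHQ ((hAH _).1 hx)) (hHQ hA₂), IsConj.refl A⟩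
end
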